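/- Fix reals V, t, H, L with t > 0, 0 < L < H, H − L < 2t and V − t − H > 0, and set x̲ = 1 − (H−L)/(2t). For every feasible reduced mechanism (y, m, m₁) there exists a feasible reduced mechanism (y', m', m₁') with y'(x) ≥ 1/2 for all x ∈ [x̲,1] whose revenue is greater than or equal to the revenue of (y, m, m₁). -/

import Mathlib

/-!
By (IC2) the indirect utility `u x = U(y x, x) - m x` of the second segment has the slope
`t (1 - 2 y x)` as a subgradient on `[x̲, 1]`, so `u q - u p ≤ ∫ₚ^q t (1 - 2 y)`.
Raise the allocation to `y' = max y (1/2)` and let `u'` be the utility it generates with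
`u' 1 = 0`; its slope `min (t (1 - 2 y)) 0` is the negative part of the slope of `u`.
Integrating that negative part from `x` up to the point where the slope of `u` changes sign,
and using `u ≥ 0` there, gives `u' ≤ u`. As `y' ≥ y` also raises every surplus `U(y', x)`,
each payment, that of the first segment included, weakly increases; the raised mechanism is
feasible because its utility is generated by its own allocation, and (OB) only relaxes.
-/

open MeasureTheory Set intervalIntegral

/-- Boundary of the first segment: `x̲ = 1 - (H-L)/(2t)`. -/
noncomputable def xlow (t H L : ℝ) : ℝ := 1 - (H - L) / (2 * t)

/-- Second-segment consumer utility `U(y', x)`. -/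
noncomputable def secU (V t L y x : ℝ) : ℝ :=
  y * (V - x * t - L) + (1 - y) * ((V - t) - (1 - x) * t - L)

/-- Utility of the first-segment consumer located at `x̲` under allocation `y'`. -/
noncomputable def firstW (V t H L y : ℝ) : ℝ :=
  y * (V - xlow t H L * t - L) + (1 - y) * (V - xlow t H L * t - H)

/-- Feasibility of a reduced mechanism `(y, m, m₁)`. -/
def Feasible (V t H L : ℝ) (y m : ℝ → ℝ) (m₁ : ℝ) : Prop :=
  Measurable y ∧
  (∀ x ∈ Icc (xlow t H L) 1, y x ∈ Icc (0 : ℝ) 1) ∧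
  Measurable m ∧
  IntervalIntegrable m volume (xlow t H L) 1 ∧
  -- (IC2)
  (∀ x ∈ Icc (xlow t H L) 1, ∀ x' ∈ Icc (xlow t H L) 1,
    secU V t L (y x) x - m x ≥ secU V t L (y x') x - m x') ∧
  -- (IC1a)
  (∀ x' ∈ Icc (xlow t H L) 1,
    (V - xlow t H L * t - H) - m₁ ≥ firstW V t H L (y x') - m x') ∧
  -- (IC1b)
  (∀ x ∈ Icc (xlow t H L) 1,
    secU V t L (y x) x - m x ≥ (V - x * t - H) - m₁) ∧
  -- (IR)
  (∀ x ∈ Icc (xlow t H L) 1, secU V t L (y x) x - m x ≥ 0) ∧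
  ((V - xlow t H L * t - H) - m₁ ≥ 0) ∧
  -- (OB)
  xlow t H L * H ≥ (xlow t H L + ∫ x in (xlow t H L)..1, (1 - y x)) * L

/-- Broker revenue of a reduced mechanism. -/
noncomputable def Revenue (t H L : ℝ) (m : ℝ → ℝ) (m₁ : ℝ) : ℝ :=
  xlow t H L * m₁ + ∫ x in (xlow t H L)..1, m x

open Filter Topology

def IsSubgradientOn (u g : ℝ → ℝ) (s : Set ℝ) : Prop :=
  ∀ x ∈ s, ∀ x' ∈ s, u x' + (x - x') * g x' ≤ u x

namespace IsSubgradientOn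

variable {u g : ℝ → ℝ} {s : Set ℝ} {p q : ℝ}

theorem mono {s' : Set ℝ} (h : IsSubgradientOn u g s) (hs : s' ⊆ s) : IsSubgradientOn u g s' :=
  fun x hx x' hx' => h x (hs hx) x' (hs hx')

theorem monotoneOn (h : IsSubgradientOn u g s) : MonotoneOn g s := by
  intro a ha b hb hab
  rcases hab.eq_or_lt with rfl | hlt
  · exact le_rfl
  · nlinarith [h a ha b hb, h b hb a ha]

theorem intervalIntegrable (h : IsSubgradientOn u g (Icc p q)) {x x' : ℝ} (hx : x ∈ Icc p q)
    (hx' : x' ∈ Icc p q) : IntervalIntegrable g volume x x' :=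
  (h.monotoneOn.mono (uIcc_subset_Icc hx hx')).intervalIntegrable

theorem sub_le_integral_add_mul (h : IsSubgradientOn u g (Icc p q)) {x x' : ℝ}
    (hx : x ∈ Icc p q) (hx' : x' ∈ Icc p q) (hxx' : x ≤ x') :
    u x' - u x ≤ (∫ s in x..x', g s) + (x' - x) * (g x' - g x) := by
  have hint : (x' - x) * g x ≤ ∫ s in x..x', g s := by
    simpa [mul_comm] using integral_mono_on hxx' intervalIntegrable_const
      (h.intervalIntegrable hx hx')
      (fun s hs => h.monotoneOn hx (Icc_subset_Icc hx.1 hx'.2 hs) hs.1)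
  nlinarith [h x hx x' hx']

theorem sub_le_integral_add_div (h : IsSubgradientOn u g (Icc p q)) (hpq : p ≤ q) (n : ℕ) :
    u q - u p ≤ (∫ s in p..q, g s) + (q - p) * (g q - g p) * (1 / (n + 1)) := by
  set δ := (q - p) / (n + 1)
  set a : ℕ → ℝ := fun k => p + k * δ
  have ha_mono : Monotone a := fun i j hij => by
    simp only [a]; gcongr
  have ha_last : a (n + 1) = q := by
    simp only [a, δ]; push_cast; field_simp; ring
  have ha_mem : ∀ k ≤ n + 1, a k ∈ Icc p q := fun k hk =>
    ⟨by simpa [a] using ha_mono (Nat.zero_le k), ha_last ▸ ha_mono hk⟩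
  have key : ∀ k ≤ n + 1, u (a k) - u p ≤ (∫ s in p..a k, g s) + δ * (g (a k) - g p) := by
    intro k
    induction k with
    | zero => simp [a]
    | succ k ih =>
      intro hk
      have hstep := h.sub_le_integral_add_mul (ha_mem k (by omega)) (ha_mem (k + 1) hk)
        (ha_mono k.le_succ)
      have hlen : a (k + 1) - a k = δ := by simp only [a]; push_cast; ring
      rw [hlen] at hstep
      rw [← integral_add_adjacent_intervals
        (h.intervalIntegrable (left_mem_Icc.2 hpq) (ha_mem k (by omega)))
        (h.intervalIntegrable (ha_mem k (by omega)) (ha_mem (k + 1) hk))]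
      linarith [ih (by omega)]
  have := key (n + 1) le_rfl
  rw [ha_last] at this
  convert this using 2
  simp only [δ]; ring

theorem sub_le_integral (h : IsSubgradientOn u g (Icc p q)) (hpq : p ≤ q) :
    u q - u p ≤ ∫ s in p..q, g s := by
  have hlim : Tendsto (fun n : ℕ => (∫ s in p..q, g s) + (q - p) * (g q - g p) * (1 / (n + 1)))
      atTop (𝓝 (∫ s in p..q, g s)) := by
    simpa using (tendsto_one_div_add_atTop_nhds_zero_nat.const_mul
      ((q - p) * (g q - g p))).const_add (∫ s in p..q, g s)
  exact ge_of_tendsto' hlim (h.sub_le_integral_add_div hpq)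

end IsSubgradientOn

theorem MonotoneOn.exists_nonpos_Ioo_nonneg_Ioo {g : ℝ → ℝ} {p q : ℝ} (hg : MonotoneOn g (Icc p q))
    (hpq : p ≤ q) : ∃ a ∈ Icc p q, (∀ s ∈ Ioo p a, g s ≤ 0) ∧ ∀ s ∈ Ioo a q, 0 ≤ g s := by
  set S := insert p {z ∈ Icc p q | g z ≤ 0}
  have hS : S ⊆ Icc p q := insert_subset (left_mem_Icc.2 hpq) (sep_subset _ _)
  have hbdd : BddAbove S := bddAbove_Icc.mono hS
  refine ⟨sSup S, ⟨le_csSup hbdd (mem_insert _ _), csSup_le (insert_nonempty _ _)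
    fun z hz => (hS hz).2⟩, fun s hs => ?_, fun s hs => ?_⟩
  · obtain ⟨z, hzS, hsz⟩ := exists_lt_of_lt_csSup (insert_nonempty _ _) hs.2
    rcases hzS with rfl | ⟨hz, hgz⟩
    · exact absurd hs.1 hsz.not_gt
    · exact (hg ⟨hs.1.le, hsz.le.trans hz.2⟩ hz hsz.le).trans hgz
  · by_contra! hneg
    exact hs.1.not_ge (le_csSup hbdd (Or.inr ⟨⟨(le_csSup hbdd (mem_insert _ _)).trans hs.1.le,
      hs.2.le⟩, hneg.le⟩))

theorem IsSubgradientOn.neg_integral_min_zero_le {u g : ℝ → ℝ} {p q : ℝ}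
    (h : IsSubgradientOn u g (Icc p q)) (hpq : p ≤ q) (hu : ∀ x ∈ Icc p q, 0 ≤ u x) :
    -∫ s in p..q, min (g s) 0 ≤ u p := by
  obtain ⟨a, ha, hneg, hpos⟩ := h.monotoneOn.exists_nonpos_Ioo_nonneg_Ioo hpq
  have hmin_int : ∀ x ∈ Icc p q, ∀ x' ∈ Icc p q,
      IntervalIntegrable (fun s => min (g s) 0) volume x x' := fun x hx x' hx' =>
    ((h.monotoneOn.mono (uIcc_subset_Icc hx hx')).min monotoneOn_const).intervalIntegrable
  have hleft : ∫ s in p..a, min (g s) 0 = ∫ s in p..a, g s :=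
    integral_congr_Ioo_of_le ha.1 fun s hs => min_eq_left (hneg s hs)
  have hright : ∫ s in a..q, min (g s) 0 = 0 := by
    rw [integral_congr_Ioo_of_le ha.2 fun s hs => min_eq_right (hpos s hs)]
    simp
  have hinc := (h.mono (Icc_subset_Icc_right ha.2)).sub_le_integral ha.1
  rw [← integral_add_adjacent_intervals (hmin_int p (left_mem_Icc.2 hpq) a ha)
    (hmin_int a ha q (right_mem_Icc.2 hpq)), hleft, hright]
  linarith [hu a ha]

theorem MonotoneOn.isSubgradientOn_integral {g : ℝ → ℝ} {p q : ℝ} (hg : MonotoneOn g (Icc p q))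
    (b : ℝ) (hb : b ∈ Icc p q) : IsSubgradientOn (fun x => ∫ s in b..x, g s) g (Icc p q) := by
  intro x hx x' hx'
  have hint : ∀ {z z'}, z ∈ Icc p q → z' ∈ Icc p q → IntervalIntegrable g volume z z' :=
    fun hz hz' => (hg.mono (uIcc_subset_Icc hz hz')).intervalIntegrable
  dsimp only
  rw [← integral_add_adjacent_intervals (hint hb hx') (hint hx' hx)]
  suffices (x - x') * g x' ≤ ∫ s in x'..x, g s by linarith
  rcases le_total x' x with hle | hle
  · simpa [mul_comm] using integral_mono_on hle intervalIntegrable_const (hint hx' hx)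
      (fun s hs => hg hx' (Icc_subset_Icc hx'.1 hx.2 hs) hs.1)
  · rw [integral_symm]
    have := integral_mono_on hle (hint hx hx') intervalIntegrable_const
      (fun s hs => hg (Icc_subset_Icc hx.1 hx'.2 hs) hx' hs.2)
    simp only [intervalIntegral.integral_const, smul_eq_mul] at this
    linarith

theorem intervalIntegrable_of_mem_Icc_zero_one {f : ℝ → ℝ} {a b : ℝ} (hab : a ≤ b)
    (hf : Measurable f) (hf01 : ∀ x ∈ Icc a b, f x ∈ Icc (0 : ℝ) 1) :
    IntervalIntegrable f volume a b := by
  rw [intervalIntegrable_iff_integrableOn_Icc_of_le hab]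
  refine Measure.integrableOn_of_bounded measure_Icc_lt_top.ne hf.aestronglyMeasurable (M := 1) ?_
  filter_upwards [ae_restrict_mem measurableSet_Icc] with x hx
  rw [Real.norm_eq_abs, abs_le]
  constructor <;> linarith [(hf01 x hx).1, (hf01 x hx).2]

section Mechanism

variable {V t H L : ℝ}

theorem xlow_pos (ht : 0 < t) (hHL : H - L < 2 * t) : 0 < xlow t H L := by
  have : (H - L) / (2 * t) < 1 := (div_lt_one (by positivity)).2 hHL
  unfold xlow; linarith

theorem xlow_le_one (ht : 0 < t) (hLH : L ≤ H) : xlow t H L ≤ 1 := by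
  have : 0 ≤ (H - L) / (2 * t) := div_nonneg (by linarith) (by positivity)
  unfold xlow; linarith

theorem secU_eq_add (y x x' : ℝ) :
    secU V t L y x = secU V t L y x' + (x - x') * (t * (1 - 2 * y)) := by
  unfold secU; ring

theorem secU_sub_secU (y₀ y₁ x : ℝ) :
    secU V t L y₁ x - secU V t L y₀ x = (y₁ - y₀) * (2 * t * (1 - x)) := by
  unfold secU; ring

/-- `x̲` is the location at which the two outside options `V - x t - H` and
`V - t - (1 - x) t - L` coincide. -/
theorem firstW_eq_secU_xlow (ht : t ≠ 0) (y : ℝ) :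
    firstW V t H L y = secU V t L y (xlow t H L) := by
  unfold firstW secU xlow; field_simp; ring

theorem intervalIntegrable_secU {y : ℝ → ℝ} {a b : ℝ} (hab : a ≤ b) (hy : Measurable y)
    (hy01 : ∀ x ∈ Icc a b, y x ∈ Icc (0 : ℝ) 1) :
    IntervalIntegrable (fun x => secU V t L (y x) x) volume a b := by
  have hyI := intervalIntegrable_of_mem_Icc_zero_one hab hy hy01
  unfold secU
  exact (hyI.mul_continuousOn (by fun_prop)).add
    ((intervalIntegrable_const.sub hyI).mul_continuousOn (by fun_prop))

theorem measurable_secU {y : ℝ → ℝ} (hy : Measurable y) :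
    Measurable (fun x => secU V t L (y x) x) := by
  unfold secU; fun_prop

variable {y m : ℝ → ℝ} {m₁ : ℝ}

theorem Feasible.isSubgradientOn_utility (hf : Feasible V t H L y m m₁) :
    IsSubgradientOn (fun x => secU V t L (y x) x - m x) (fun x => t * (1 - 2 * y x))
      (Icc (xlow t H L) 1) := by
  intro x hx x' hx'
  have := hf.2.2.2.2.1 x hx x' hx'
  rw [secU_eq_add (y x') x x'] at this
  dsimp only
  linarith

theorem Feasible.utility_xlow_le (ht : t ≠ 0) (hc : xlow t H L ≤ 1)
    (hf : Feasible V t H L y m m₁) :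
    secU V t L (y (xlow t H L)) (xlow t H L) - m (xlow t H L) ≤
      V - xlow t H L * t - H - m₁ := by
  have := hf.2.2.2.2.2.1 _ (left_mem_Icc.2 hc)
  rw [firstW_eq_secU_xlow ht] at this
  linarith

theorem feasible_of_isSubgradientOn (ht : 0 < t) (hc : xlow t H L ≤ 1) {u : ℝ → ℝ}
    (hy : Measurable y) (hy01 : ∀ x ∈ Icc (xlow t H L) 1, y x ∈ Icc (0 : ℝ) 1)
    (hu : Continuous u)
    (hsub : IsSubgradientOn u (fun x => t * (1 - 2 * y x)) (Icc (xlow t H L) 1))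
    (hu0 : ∀ x ∈ Icc (xlow t H L) 1, 0 ≤ u x)
    (hOB : xlow t H L * H ≥ (xlow t H L + ∫ x in (xlow t H L)..1, (1 - y x)) * L) :
    Feasible V t H L y (fun x => secU V t L (y x) x - u x)
      (V - xlow t H L * t - H - u (xlow t H L)) := by
  set c := xlow t H L
  have hcc : c ∈ Icc c 1 := left_mem_Icc.2 hc
  refine ⟨hy, hy01, (measurable_secU hy).sub hu.measurable,
    (intervalIntegrable_secU hc hy hy01).sub (hu.intervalIntegrable _ _), ?_, ?_, ?_, ?_, ?_, hOB⟩
  · intro x hx x' hx'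
    have := hsub x hx x' hx'
    rw [secU_eq_add (y x') x x']
    linarith
  · intro x' hx'
    have := hsub c hcc x' hx'
    rw [firstW_eq_secU_xlow ht.ne', secU_eq_add (y x') c x']
    linarith
  · intro x hx
    have := hsub x hx c hcc
    have hyc : 0 ≤ 1 - y c := sub_nonneg.2 (hy01 c hcc).2
    nlinarith [mul_nonneg (mul_nonneg (sub_nonneg.2 hx.1) ht.le) hyc]
  · intro x hx
    linarith [hu0 x hx]
  · linarith [hu0 c hcc]

theorem revenue_le_revenue {m' : ℝ → ℝ} {m₁' : ℝ} (hc0 : 0 ≤ xlow t H L) (hc : xlow t H L ≤ 1)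
    (hm₁ : m₁ ≤ m₁') (hm : ∀ x ∈ Icc (xlow t H L) 1, m x ≤ m' x)
    (hmI : IntervalIntegrable m volume (xlow t H L) 1)
    (hm'I : IntervalIntegrable m' volume (xlow t H L) 1) :
    Revenue t H L m m₁ ≤ Revenue t H L m' m₁' :=
  add_le_add (mul_le_mul_of_nonneg_left hm₁ hc0) (integral_mono_on hc hmI hm'I hm)

end Mechanism

/-- The allocation `max y (1/2)`; the cap at `1`, harmless where `y ≤ 1`, keeps it bounded on all
of `ℝ`. -/
noncomputable def raisedAlloc (y : ℝ → ℝ) (x : ℝ) : ℝ := max (min (y x) 1) (1 / 2)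

noncomputable def raisedUtility (t : ℝ) (y : ℝ → ℝ) (x : ℝ) : ℝ :=
  ∫ s in (1 : ℝ)..x, t * (1 - 2 * raisedAlloc y s)

section Raised

variable {t : ℝ} {y : ℝ → ℝ} {c : ℝ}

theorem raisedAlloc_mem_Icc (y : ℝ → ℝ) (x : ℝ) : raisedAlloc y x ∈ Icc (1 / 2 : ℝ) 1 :=
  ⟨le_max_right _ _, max_le (min_le_right _ _) (by norm_num)⟩

theorem raisedAlloc_mem_Icc_zero_one (y : ℝ → ℝ) (x : ℝ) : raisedAlloc y x ∈ Icc (0 : ℝ) 1 :=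
  Icc_subset_Icc_left (by norm_num) (raisedAlloc_mem_Icc y x)

theorem le_raisedAlloc {x : ℝ} (hx : y x ≤ 1) : y x ≤ raisedAlloc y x := by
  unfold raisedAlloc
  rw [min_eq_left hx]
  exact le_max_left _ _

theorem measurable_raisedAlloc (hy : Measurable y) : Measurable (raisedAlloc y) := by
  unfold raisedAlloc; fun_prop

theorem mul_one_sub_two_mul_raisedAlloc (ht : 0 ≤ t) {x : ℝ} (hx : y x ≤ 1) :
    t * (1 - 2 * raisedAlloc y x) = min (t * (1 - 2 * y x)) 0 := by
  unfold raisedAlloc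
  rw [min_eq_left hx]
  rcases le_total (y x) (1 / 2) with h | h
  · rw [max_eq_right h, min_eq_right (by nlinarith)]; ring
  · rw [max_eq_left h, min_eq_left (by nlinarith)]

theorem continuous_raisedUtility (hy : Measurable y) : Continuous (raisedUtility t y) := by
  have hyI (a b : ℝ) (hab : a ≤ b) : IntervalIntegrable (raisedAlloc y) volume a b :=
    intervalIntegrable_of_mem_Icc_zero_one hab (measurable_raisedAlloc hy) fun x _ =>
      raisedAlloc_mem_Icc_zero_one y x
  refine continuous_primitive (fun a b => ?_) 1
  have hI := (le_total a b).elim (hyI a b) fun h => (hyI b a h).symm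
  exact (intervalIntegrable_const.sub (hI.const_mul 2)).const_mul t

theorem isSubgradientOn_raisedUtility (ht : 0 ≤ t) (hc : c ≤ 1)
    (hy1 : ∀ x ∈ Icc c 1, y x ≤ 1) (hg : MonotoneOn (fun x => t * (1 - 2 * y x)) (Icc c 1)) :
    IsSubgradientOn (raisedUtility t y) (fun x => t * (1 - 2 * raisedAlloc y x)) (Icc c 1) :=
  MonotoneOn.isSubgradientOn_integral
    ((hg.min monotoneOn_const).congr fun x hx =>
      (mul_one_sub_two_mul_raisedAlloc ht (hy1 x hx)).symm) 1 (right_mem_Icc.2 hc)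

theorem raisedUtility_nonneg (ht : 0 ≤ t) {x : ℝ} (hx : x ≤ 1) : 0 ≤ raisedUtility t y x := by
  rw [raisedUtility, integral_symm, neg_nonneg, integral_of_le hx]
  exact integral_nonpos fun s => mul_nonpos_of_nonneg_of_nonpos ht
    (by linarith [(raisedAlloc_mem_Icc y s).1])

theorem raisedUtility_le (ht : 0 ≤ t) {u : ℝ → ℝ}
    (hsub : IsSubgradientOn u (fun x => t * (1 - 2 * y x)) (Icc c 1))
    (hu0 : ∀ x ∈ Icc c 1, 0 ≤ u x) (hy1 : ∀ x ∈ Icc c 1, y x ≤ 1) {x : ℝ} (hx : x ∈ Icc c 1) :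
    raisedUtility t y x ≤ u x := by
  have hxc : Icc x 1 ⊆ Icc c 1 := Icc_subset_Icc_left hx.1
  rw [raisedUtility, integral_symm, integral_congr fun s hs =>
    mul_one_sub_two_mul_raisedAlloc ht (hy1 s (hxc (uIcc_of_le hx.2 ▸ hs)))]
  exact (hsub.mono hxc).neg_integral_min_zero_le hx.2 fun s hs => hu0 s (hxc hs)

theorem integral_one_sub_raisedAlloc_le (hc : c ≤ 1) (hy : Measurable y)
    (hy01 : ∀ x ∈ Icc c 1, y x ∈ Icc (0 : ℝ) 1) :
    ∫ x in c..1, (1 - raisedAlloc y x) ≤ ∫ x in c..1, (1 - y x) := by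
  have hyI := intervalIntegrable_of_mem_Icc_zero_one hc hy hy01
  have hy'I := intervalIntegrable_of_mem_Icc_zero_one hc (measurable_raisedAlloc hy) fun x _ =>
      raisedAlloc_mem_Icc_zero_one y x
  exact integral_mono_on hc (intervalIntegrable_const.sub hy'I) (intervalIntegrable_const.sub hyI)
    fun x hx => sub_le_sub_left (le_raisedAlloc (hy01 x hx).2) 1

end Raised

theorem statement8_general (V t H L : ℝ) (ht : 0 < t) (hL0 : 0 < L) (hLH : L < H)
    (hHL : H - L < 2 * t)
    (y m : ℝ → ℝ) (m₁ : ℝ) (hfeas : Feasible V t H L y m m₁) :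
    ∃ y' : ℝ → ℝ, ∃ m' : ℝ → ℝ, ∃ m₁' : ℝ,
      Feasible V t H L y' m' m₁' ∧
      (∀ x ∈ Icc (xlow t H L) 1, (1 : ℝ) / 2 ≤ y' x) ∧
      Revenue t H L m m₁ ≤ Revenue t H L m' m₁' := by
  obtain ⟨hy, hy01, -, hmI, -, -, -, hu0, -, hOB⟩ := id hfeas
  have hc0 := xlow_pos ht hHL
  have hc1 := xlow_le_one ht hLH.le
  set c := xlow t H L
  have hy1 : ∀ x ∈ Icc c 1, y x ≤ 1 := fun x hx => (hy01 x hx).2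
  have hsub := hfeas.isSubgradientOn_utility
  have hu'_le : ∀ x ∈ Icc c 1, raisedUtility t y x ≤ secU V t L (y x) x - m x :=
    fun _ => raisedUtility_le ht.le hsub hu0 hy1
  have hfeas' := feasible_of_isSubgradientOn (V := V) ht hc1 (measurable_raisedAlloc hy)
    (fun x _ => raisedAlloc_mem_Icc_zero_one y x)
    (continuous_raisedUtility hy) (isSubgradientOn_raisedUtility ht.le hc1 hy1 hsub.monotoneOn)
    (fun x hx => raisedUtility_nonneg ht.le hx.2)
    (hOB.trans' (by gcongr; exact integral_one_sub_raisedAlloc_le hc1 hy hy01))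
  refine ⟨_, _, _, hfeas', fun x _ => (raisedAlloc_mem_Icc y x).1,
    revenue_le_revenue hc0.le hc1 ?_ (fun x hx => ?_) hmI hfeas'.2.2.2.1⟩
  · linarith [hfeas.utility_xlow_le ht.ne' hc1, hu'_le c (left_mem_Icc.2 hc1)]
  · have := secU_sub_secU (V := V) (L := L) (t := t) (y x) (raisedAlloc y x) x
    have hgain : 0 ≤ (raisedAlloc y x - y x) * (2 * t * (1 - x)) :=
      mul_nonneg (sub_nonneg.2 (le_raisedAlloc (hy1 x hx))) (by nlinarith [hx.2])
    linarith [hu'_le x hx]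

/-- Every feasible reduced mechanism is weakly revenue-dominated by a feasible
reduced mechanism whose allocation satisfies `y'(x) ≥ 1/2` on `[x̲,1]`. -/
theorem statement8 (V t H L : ℝ) (ht : 0 < t) (hL0 : 0 < L) (hLH : L < H)
    (hHL : H - L < 2 * t) (hV : 0 < V - t - H)
    (y m : ℝ → ℝ) (m₁ : ℝ) (hfeas : Feasible V t H L y m m₁) :
    ∃ y' : ℝ → ℝ, ∃ m' : ℝ → ℝ, ∃ m₁' : ℝ,
      Feasible V t H L y' m' m₁' ∧
      (∀ x ∈ Icc (xlow t H L) 1, (1 : ℝ) / 2 ≤ y' x) ∧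
      Revenue t H L m m₁ ≤ Revenue t H L m' m₁' :=
  statement8_general V t H L ht hL0 hLH hHL y m m₁ hfeas
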